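/- Let R be a ring and S a set with |S| ≥ ℵ₀. Suppose Ψ : S → R is a function such that each element Ψ(s) is a non-unit (does not generate the unit ideal). Then there is no R-linear map r : R ⊕ (⊕_S R) → R{S} such that r ∘ Ψ_{R,S} = R(ι_S), i.e., such that for all s ∈ S, r(1_0) + Ψ(s)·r(1_s) equals X_s in R{S}. -/

import Mathlib

/-- `R{S} = R[X_s : s ∈ S] / (X_s² - X_s)`. -/
abbrev RBrace (R S : Type*) [CommRing R] : Type _ :=
  MvPolynomial S R ⧸
    (Ideal.span (Set.range fun s : S =>
      (MvPolynomial.X s * MvPolynomial.X s - MvPolynomial.X s : MvPolynomial S R)))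

/-- The `R`-linear map `R(ι_S) : ⊕_S R → R{S}` sending `1_s` to `X_s`. -/
noncomputable def iotaMap (R S : Type*) [CommRing R] : (S →₀ R) →ₗ[R] RBrace R S :=
  Finsupp.lsum R fun s =>
    LinearMap.toSpanSingleton R _ (Ideal.Quotient.mk _ (MvPolynomial.X s))

/-- The `R`-linear map `Ψ_{R,S} : ⊕_S R → R ⊕ (⊕_S R)` associated to a function `Ψ : S → R`,
sending the basis vector `1_s` to `(1, Ψ s • 1_s)`. -/
noncomputable def psiMap (R : Type*) [CommRing R] (S : Type*) (Ψ : S → R) :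
    (S →₀ R) →ₗ[R] R × (S →₀ R) :=
  Finsupp.lsum R fun s => LinearMap.prod LinearMap.id ((Ψ s) • Finsupp.lsingle s)

open MvPolynomial in
/-- Evaluation at a "Boolean" point (one where `v s ^ 2 = v s`) descends to `RBrace`. -/
noncomputable def evalBrace {R S : Type*} [CommRing R] (v : S → R)
    (hv : ∀ s, v s * v s - v s = 0) : RBrace R S →ₐ[R] R :=
  Ideal.Quotient.liftₐ _ (aeval v) (by
    intro a ha
    refine Submodule.span_induction ?_ ?_ ?_ ?_ ha
    · rintro _ ⟨s, rfl⟩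
      simp [hv s]
    · simp
    · intro x y _ _ hx hy; simp only [map_add, hx, hy, add_zero]
    · intro c x _ hx; simp only [smul_eq_mul, map_mul, hx, mul_zero])

/-- Let `R` be a ring, `S` a set with `|S| ≥ ℵ₀` and `Ψ : S → R` a function
all of whose values are non-units.  Then there is no `R`-linear map
`r : R ⊕ (⊕_S R) → R{S}` with `r ∘ Ψ_{R,S} = R(ι_S)`, i.e. the map `Ψ_{R,S}` does not extend
along `R(ι_S) : ⊕_S R → R{S}`. -/
theorem stmt19 (R : Type*) [CommRing R] (S : Type*)
    (hS : Cardinal.aleph0 ≤ Cardinal.mk S)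
    (Ψ : S → R) (hΨ : ∀ s, ¬IsUnit (Ψ s)) :
    ¬∃ r : (R × (S →₀ R)) →ₗ[R] RBrace R S, r.comp (psiMap R S Ψ) = iotaMap R S := by
  rintro ⟨r, hr⟩
  classical
  have : Infinite S := Cardinal.infinite_iff.mpr hS
  -- key identity: r (1,0) + Ψ s • r (0, single s 1) = mk (X s)
  have key : ∀ s : S, r (1, 0) + Ψ s • r (0, Finsupp.single s 1)
      = Ideal.Quotient.mk _ (MvPolynomial.X s) := by
    intro s
    have := congrArg (fun f => f (Finsupp.single s 1)) hr
    simp only [LinearMap.comp_apply, psiMap, iotaMap, Finsupp.lsum_single,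
      LinearMap.prod_apply, LinearMap.id_apply, LinearMap.smul_apply,
      Finsupp.lsingle_apply, Function.prod, LinearMap.toSpanSingleton_apply] at this
    rw [show ((1 : R), Ψ s • Finsupp.single s (1:R)) =
      (1, (0 : S →₀ R)) + Ψ s • (0, Finsupp.single s 1) by simp [Prod.ext_iff],
      map_add, map_smul] at this
    simpa using this
  -- pick a representative F of r (1,0)
  obtain ⟨F, hF⟩ := Ideal.Quotient.mk_surjective (I := Ideal.span (Set.range fun s : S =>
      (MvPolynomial.X s * MvPolynomial.X s - MvPolynomial.X s : MvPolynomial S R))) (r (1, 0))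
  -- choose s outside the variables of F
  obtain ⟨s, hs⟩ := Infinite.exists_notMem_finset F.vars
  -- evaluation at the indicator of s, and at 0
  set v : S → R := fun t => if t = s then 1 else 0 with hv_def
  have hv : ∀ t, v t * v t - v t = 0 := by
    intro t; by_cases h : t = s <;> simp [hv_def, h]
  have hv0 : ∀ t : S, (0 : S → R) t * (0 : S → R) t - (0 : S → R) t = 0 := by simp
  set E1 := evalBrace v hv
  set E0 := evalBrace (0 : S → R) hv0
  have hE1F : E1 (r (1, 0)) = algebraMap R R (MvPolynomial.constantCoeff F) := by
    rw [← hF]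
    show MvPolynomial.aeval v F = _
    refine MvPolynomial.aeval_eq_constantCoeff_of_vars fun i hi => ?_
    have hne : i ≠ s := fun h => hs (h ▸ hi)
    simp [hv_def, hne]
  have hE0F : E0 (r (1, 0)) = algebraMap R R (MvPolynomial.constantCoeff F) := by
    rw [← hF]
    show MvPolynomial.aeval (0 : S → R) F = _
    exact MvPolynomial.aeval_eq_constantCoeff_of_vars fun i _ => rfl
  have h1 := congrArg E1 (key s)
  have h0 := congrArg E0 (key s)
  rw [map_add, map_smul, hE1F] at h1
  rw [map_add, map_smul, hE0F] at h0
  have hX1 : E1 (Ideal.Quotient.mk _ (MvPolynomial.X s)) = 1 := by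
    show MvPolynomial.aeval v (MvPolynomial.X s) = 1
    simp [hv_def]
  have hX0 : E0 (Ideal.Quotient.mk _ (MvPolynomial.X s)) = 0 := by
    show MvPolynomial.aeval (0 : S → R) (MvPolynomial.X s) = 0
    simp
  rw [hX1] at h1
  rw [hX0] at h0
  -- subtract: Ψ s * (E1 g - E0 g) = 1
  have : Ψ s * (E1 (r (0, Finsupp.single s 1)) - E0 (r (0, Finsupp.single s 1))) = 1 := by
    simp only [smul_eq_mul] at h1 h0
    linear_combination h1 - h0
  exact hΨ s (IsUnit.of_mul_eq_one _ this)
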